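/- arXiv:1912.03177 — 3 statements merged into one kernel-verified Lean document; each statement's English description precedes it below -/
import Mathlib

section
/- Let n ≥ 1, λ : Fin n → ℝ, ω : Fin n → ℝ, with grouped weight ω̄(x) = Σ_{j : λ j = x} ω j and support S = { x ∈ Set.range λ : ω̄(x) ≠ 0 }. Define m k = Σ_i ω i * (λ i)^k and the n×n Hankel matrix H with H s t = m (s + t). Then the column space of H (the span of the columns of H in ℝⁿ) equals the span of the Vandermonde vectors { v(x) : x ∈ S }, where v(x) j = x^j for j ∈ Fin n. -/
/-!
Grouping equal nodes, `H = ∑_{x ∈ S} ω̄(x) v(x) v(x)ᵀ`, so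
`H z = ∑_{x ∈ S} ω̄(x) (v(x) ⬝ z) v(x)` lies in the span of the `v(x)`. Conversely, as `|S| ≤ n`,
Lagrange interpolation on `S` gives `z` with `v(x) ⬝ z = δ_{x x₀} / ω̄(x₀)` for `x ∈ S`,
and then `H z = v(x₀)`.
-/

open Matrix Finset

section

variable {K : Type*} [Field K]

def vandermondeVec (n : ℕ) (x : K) : Fin n → K := fun j => x ^ (j : ℕ)

def momentHankel (n : ℕ) (S : Finset K) (w : K → K) : Matrix (Fin n) (Fin n) K :=
  of fun s t => ∑ x ∈ S, w x * x ^ ((s : ℕ) + t)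

theorem exists_vandermondeVec_dotProduct_eq {n : ℕ} {S : Finset K} (hS : #S ≤ n) (c : K → K) :
    ∃ z : Fin n → K, ∀ x ∈ S, vandermondeVec n x ⬝ᵥ z = c x := by
  classical
  have hinj : Set.InjOn id (S : Set K) := Set.injOn_id _
  set P := Lagrange.interpolate S id c
  have hP : P ∈ Polynomial.degreeLT K n := Polynomial.mem_degreeLT.mpr <|
    (Lagrange.degree_interpolate_lt c hinj).trans_le (by exact_mod_cast hS)
  refine ⟨Polynomial.degreeLTEquiv K n ⟨P, hP⟩, fun x hx => ?_⟩
  rw [← Lagrange.eval_interpolate_at_node c hinj hx, id, Polynomial.eval_eq_sum_degreeLTEquiv hP]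
  simp only [dotProduct, vandermondeVec, mul_comm]

theorem momentHankel_mulVec (n : ℕ) (S : Finset K) (w : K → K) (z : Fin n → K) :
    momentHankel n S w *ᵥ z =
      ∑ x ∈ S, (w x * (vandermondeVec n x ⬝ᵥ z)) • vandermondeVec n x := by
  ext s
  simp only [mulVec, dotProduct, momentHankel, vandermondeVec, of_apply, Finset.sum_apply,
    Pi.smul_apply, smul_eq_mul, Finset.sum_mul, Finset.mul_sum, pow_add]
  rw [Finset.sum_comm]
  refine Finset.sum_congr rfl fun x _ => Finset.sum_congr rfl fun t _ => by ring

theorem range_momentHankel_mulVecLin {n : ℕ} {S : Finset K} {w : K → K} (hS : #S ≤ n)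
    (hw : ∀ x ∈ S, w x ≠ 0) :
    LinearMap.range (momentHankel n S w).mulVecLin = Submodule.span K (vandermondeVec n '' S) := by
  apply le_antisymm
  · rintro _ ⟨z, rfl⟩
    rw [mulVecLin_apply, momentHankel_mulVec]
    exact Submodule.sum_smul_mem _ _ fun x hx => Submodule.subset_span (Set.mem_image_of_mem _ hx)
  · rw [Submodule.span_le]
    rintro _ ⟨x₀, hx₀, rfl⟩
    classical
    obtain ⟨z, hz⟩ := exists_vandermondeVec_dotProduct_eq hS (Pi.single x₀ (w x₀)⁻¹)
    refine ⟨z, ?_⟩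
    rw [mulVecLin_apply, momentHankel_mulVec, Finset.sum_eq_single_of_mem x₀ hx₀]
    · rw [hz x₀ hx₀, Pi.single_eq_same, mul_inv_cancel₀ (hw x₀ hx₀), one_smul]
    · intro x hx hne
      rw [hz x hx, Pi.single_eq_of_ne hne, mul_zero, zero_smul]

end

section

variable {ι K : Type*} [Fintype ι] [Semiring K] [DecidableEq K]

def groupedWeight (l ω : ι → K) (x : K) : K := ∑ j ∈ univ.filter (fun j => l j = x), ω j

def weightSupport (l ω : ι → K) : Finset K :=
  (univ.image l).filter fun x => groupedWeight l ω x ≠ 0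

theorem coe_weightSupport (l ω : ι → K) :
    (weightSupport l ω : Set K) = {x | x ∈ Set.range l ∧ groupedWeight l ω x ≠ 0} := by
  ext x
  simp [weightSupport]

theorem card_weightSupport_le (l ω : ι → K) : #(weightSupport l ω) ≤ Fintype.card ι :=
  (card_filter_le _ _).trans card_image_le

theorem groupedWeight_ne_zero_of_mem {l ω : ι → K} {x : K} (hx : x ∈ weightSupport l ω) :
    groupedWeight l ω x ≠ 0 :=
  (mem_filter.mp hx).2

theorem sum_mul_eq_sum_weightSupport (l ω : ι → K) (f : K → K) :
    ∑ i, ω i * f (l i) = ∑ x ∈ weightSupport l ω, groupedWeight l ω x * f x := by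
  calc ∑ i, ω i * f (l i)
      = ∑ x ∈ univ.image l, ∑ i ∈ univ.filter (fun i => l i = x), ω i * f (l i) :=
        (Finset.sum_fiberwise_of_maps_to (fun i _ => Finset.mem_image_of_mem l (mem_univ i)) _).symm
    _ = ∑ x ∈ univ.image l, groupedWeight l ω x * f x := by
        refine Finset.sum_congr rfl fun x _ => ?_
        rw [groupedWeight, Finset.sum_mul]
        exact Finset.sum_congr rfl fun i hi => by rw [(Finset.mem_filter.mp hi).2]
    _ = ∑ x ∈ weightSupport l ω, groupedWeight l ω x * f x :=
        (Finset.sum_filter_of_ne fun _ _ => left_ne_zero_of_mul).symm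

end

theorem hankel_column_space_eq_span_vandermonde_general (n : ℕ) (l ω : Fin n → ℝ)
    (m : ℕ → ℝ) (hm : ∀ k, m k = ∑ i : Fin n, ω i * l i ^ k)
    (H : Matrix (Fin n) (Fin n) ℝ) (hH : H = Matrix.of fun s t : Fin n => m ((s : ℕ) + (t : ℕ)))
    (S : Set ℝ)
    (hS : S = {x | x ∈ Set.range l ∧ ∑ j ∈ Finset.univ.filter (fun j => l j = x), ω j ≠ 0}) :
    Submodule.span ℝ (Set.range fun t : Fin n => (fun s : Fin n => H s t)) =
      Submodule.span ℝ ((fun x : ℝ => fun j : Fin n => x ^ (j : ℕ)) '' S) := by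
  have hH' : H = momentHankel n (weightSupport l ω) (groupedWeight l ω) := by
    ext s t
    rw [hH, of_apply, hm, sum_mul_eq_sum_weightSupport l ω (· ^ ((s : ℕ) + t))]
    rfl
  have hS' : S = weightSupport l ω := by
    rw [hS, coe_weightSupport]
    rfl
  have hcard : #(weightSupport l ω) ≤ n := (card_weightSupport_le l ω).trans_eq (card_fin n)
  change Submodule.span ℝ (Set.range H.col) = Submodule.span ℝ (vandermondeVec n '' S)
  rw [← range_mulVecLin, hH',
    range_momentHankel_mulVecLin hcard fun _ => groupedWeight_ne_zero_of_mem, hS']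

/-- The column space of the Hankel matrix of moments equals the span of the
Vandermonde vectors of the support values of the signed spectral measure. -/
theorem hankel_column_space_eq_span_vandermonde (n : ℕ) (hn : 1 ≤ n) (l ω : Fin n → ℝ)
    (m : ℕ → ℝ) (hm : ∀ k, m k = ∑ i : Fin n, ω i * l i ^ k)
    (H : Matrix (Fin n) (Fin n) ℝ) (hH : H = Matrix.of fun s t : Fin n => m ((s : ℕ) + (t : ℕ)))
    (S : Set ℝ)
    (hS : S = {x | x ∈ Set.range l ∧ ∑ j ∈ Finset.univ.filter (fun j => l j = x), ω j ≠ 0}) :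
    Submodule.span ℝ (Set.range fun t : Fin n => (fun s : Fin n => H s t)) =
      Submodule.span ℝ ((fun x : ℝ => fun j : Fin n => x ^ (j : ℕ)) '' S) :=
  hankel_column_space_eq_span_vandermonde_general n l ω m hm H hH S hS
end

section
/- Let n ≥ 1, λ : Fin n → ℝ, ω : Fin n → ℝ, with grouped weight ω̄(x) = Σ_{j : λ j = x} ω j and support S = { x ∈ Set.range λ : ω̄(x) ≠ 0 }. Define m k = Σ_i ω i * (λ i)^k and the n×n Hankel matrix H with H s t = m (s + t). Then the rank of H equals the cardinality of S. -/
/-!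
Grouping equal eigenvalues gives `m k = ∑ x ∈ S, ω̄ x * x ^ k`, so `H = Vᵀ (diagonal ω̄) V` with
`V` the `|S| × n` Vandermonde matrix of the support, whence `rank H ≤ |S|`. Conversely the
leading `|S| × |S|` block of `H` is `V₀ᵀ (diagonal ω̄) V₀` for a square Vandermonde matrix `V₀`
on distinct nodes, with determinant `(∏ ω̄) (det V₀)² ≠ 0`.
-/

open Matrix Finset

namespace Matrix

variable {R ι : Type*} [CommRing R] [Fintype ι]

def momentHankel (c x : ι → R) (n : ℕ) : Matrix (Fin n) (Fin n) R :=
  of fun s t => ∑ i, c i * x i ^ ((s : ℕ) + t)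

theorem momentHankel_eq_transpose_mul_diagonal_mul [DecidableEq ι] (c x : ι → R) (n : ℕ) :
    momentHankel c x n = (rectVandermonde x 1 n)ᵀ * diagonal c * rectVandermonde x 1 n := by
  ext s t
  simp only [momentHankel, of_apply, mul_apply, transpose_apply, diagonal_apply, mul_ite,
    mul_zero, sum_ite_eq', mem_univ, if_true, rectVandermonde_apply, Pi.one_apply, one_pow,
    mul_one, pow_add]
  exact sum_congr rfl fun i _ => by ring

theorem momentHankel_comp_equiv {κ : Type*} [Fintype κ] (e : κ ≃ ι) (c x : ι → R) (n : ℕ) :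
    momentHankel (c ∘ e) (x ∘ e) n = momentHankel c x n := by
  ext s t
  exact e.sum_comp fun i => c i * x i ^ ((s : ℕ) + t)

theorem momentHankel_submatrix_castLE (c x : ι → R) {m n : ℕ} (h : m ≤ n) :
    (momentHankel c x n).submatrix (Fin.castLE h) (Fin.castLE h) = momentHankel c x m :=
  rfl

theorem det_momentHankel {r : ℕ} (c x : Fin r → R) :
    (momentHankel c x r).det = (∏ i, c i) * (vandermonde x).det ^ 2 := by
  rw [momentHankel_eq_transpose_mul_diagonal_mul, vandermonde_eq_projVandermonde, projVandermonde,
    det_mul, det_mul, det_transpose, det_diagonal]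
  ring

theorem rank_momentHankel_le [StrongRankCondition R] (c x : ι → R) (n : ℕ) :
    (momentHankel c x n).rank ≤ Fintype.card ι := by
  classical
  rw [momentHankel_eq_transpose_mul_diagonal_mul]
  exact (rank_mul_le_right _ _).trans (rank_le_card_height _)

theorem rank_momentHankel [IsDomain R] {c x : ι → R} (hx : Function.Injective x)
    (hc : ∀ i, c i ≠ 0) {n : ℕ} (hn : Fintype.card ι ≤ n) :
    (momentHankel c x n).rank = Fintype.card ι := by
  refine le_antisymm (rank_momentHankel_le c x n) ?_
  set e := (Fintype.equivFin ι).symm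
  have hdet : (momentHankel (c ∘ e) (x ∘ e) (Fintype.card ι)).det ≠ 0 := by
    rw [det_momentHankel]
    exact mul_ne_zero (prod_ne_zero_iff.mpr fun i _ => hc (e i))
      (pow_ne_zero 2 (det_vandermonde_ne_zero_iff.mpr (hx.comp e.injective)))
  calc Fintype.card ι
      = (momentHankel (c ∘ e) (x ∘ e) (Fintype.card ι)).rank := by
        rw [rank_of_det_ne_zero hdet, Fintype.card_fin]
    _ = ((momentHankel c x n).submatrix (Fin.castLE hn) (Fin.castLE hn)).rank := by
        rw [momentHankel_comp_equiv, momentHankel_submatrix_castLE]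
    _ ≤ (momentHankel c x n).rank := rank_submatrix_le _ _ _

end Matrix

theorem Finset.sum_mul_comp_eq_sum_fiber_sum_ne_zero {ι α M : Type*} [Fintype ι] [DecidableEq α]
    [CommSemiring M] [DecidableEq M] (f : ι → α) (ω : ι → M) (g : α → M) :
    ∑ i, ω i * g (f i) =
      ∑ x ∈ (univ.image f).filter (fun x => ∑ j ∈ univ.filter (fun j => f j = x), ω j ≠ 0),
        (∑ j ∈ univ.filter (fun j => f j = x), ω j) * g x := by
  rw [sum_filter_of_ne fun x _ hx => left_ne_zero_of_mul hx,
    ← sum_fiberwise_of_maps_to fun i _ => mem_image_of_mem f (mem_univ i)]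
  refine sum_congr rfl fun x _ => ?_
  rw [sum_mul]
  exact sum_congr rfl fun j hj => by rw [(mem_filter.mp hj).2]

theorem hankel_rank_eq_support_card_general (n : ℕ) (l ω : Fin n → ℝ)
    (m : ℕ → ℝ) (hm : ∀ k, m k = ∑ i : Fin n, ω i * l i ^ k)
    (H : Matrix (Fin n) (Fin n) ℝ) (hH : H = Matrix.of fun s t : Fin n => m ((s : ℕ) + (t : ℕ)))
    (S : Finset ℝ)
    (hS : S = (Finset.univ.image l).filter
        (fun x => ∑ j ∈ Finset.univ.filter (fun j => l j = x), ω j ≠ 0)) :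
    H.rank = S.card := by
  set w : ℝ → ℝ := fun x => ∑ j ∈ univ.filter (fun j => l j = x), ω j
  have hH_moment : H = momentHankel (fun x : S => w x) (fun x : S => (x : ℝ)) n := by
    ext s t
    rw [hH, of_apply, hm, sum_mul_comp_eq_sum_fiber_sum_ne_zero l ω (· ^ _), ← hS]
    exact (sum_coe_sort S fun x => w x * x ^ ((s : ℕ) + t)).symm
  have hw : ∀ x : S, w x ≠ 0 := fun ⟨_, hx⟩ => by
    rw [hS, mem_filter] at hx
    exact hx.2
  have hcard : S.card ≤ n := by
    rw [hS]
    exact (card_filter_le _ _).trans (card_image_le.trans (card_fin n).le)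
  rw [hH_moment, rank_momentHankel Subtype.val_injective hw (by rwa [Fintype.card_coe]),
    Fintype.card_coe]

/-- **Lemma 2.** The rank of the Hankel matrix of moments equals the cardinality of the
support of the signed spectral measure. -/
theorem hankel_rank_eq_support_card (n : ℕ) (hn : 1 ≤ n) (l ω : Fin n → ℝ)
    (m : ℕ → ℝ) (hm : ∀ k, m k = ∑ i : Fin n, ω i * l i ^ k)
    (H : Matrix (Fin n) (Fin n) ℝ) (hH : H = Matrix.of fun s t : Fin n => m ((s : ℕ) + (t : ℕ)))
    (S : Finset ℝ)
    (hS : S = (Finset.univ.image l).filter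
        (fun x => ∑ j ∈ Finset.univ.filter (fun j => l j = x), ω j ≠ 0)) :
    H.rank = S.card :=
  hankel_rank_eq_support_card_general n l ω m hm H hH S hS
end

section
/- Let n, d ≥ 1, let L be an n×n real matrix, A a d×d real matrix, c, x₀ ∈ ℝⁿ, and γ, β ∈ ℝᵈ. Then for every k ∈ ℕ, (c ⊗ γ)ᵀ *ᵥ ((I_n ⊗ A + L ⊗ I_d)^k *ᵥ (x₀ ⊗ β)) = Σ_{s=0}^{k} (k choose s) * (cᵀ L^s x₀) * (γᵀ A^{k−s} β), where ⊗ on vectors denotes the Kronecker product of vectors and ⊗ on matrices the Kronecker product of matrices. -/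
open Matrix Finset
open scoped Kronecker

/-- Kronecker product of two vectors. -/
def vecKron {n d : ℕ} (x : Fin n → ℝ) (y : Fin d → ℝ) : Fin n × Fin d → ℝ :=
  fun p => x p.1 * y p.2

/-! The power of the coupled dynamics `I ⊗ A + L ⊗ I` splits by the binomial theorem, since
`L ⊗ I` and `I ⊗ A` commute, into the terms `C(k,s) • (L ^ s ⊗ A ^ (k - s))`. A Kronecker matrix
acts factorwise on a Kronecker vector and the dot product of two Kronecker vectors factors, so
each term contributes `C(k,s) (cᵀ L^s x₀)(γᵀ A^{k-s} β)`. -/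

namespace Matrix

variable {R m n : Type*} [CommSemiring R] [Fintype m] [Fintype n] [DecidableEq m] [DecidableEq n]

theorem kronecker_pow (M : Matrix m m R) (N : Matrix n n R) (k : ℕ) :
    (M ⊗ₖ N) ^ k = (M ^ k) ⊗ₖ (N ^ k) := by
  induction k with
  | zero => simp
  | succ k ih => rw [pow_succ, ih, ← mul_kronecker_mul, ← pow_succ, ← pow_succ]

theorem commute_kronecker_one_one_kronecker (L : Matrix m m R) (A : Matrix n n R) :
    Commute (L ⊗ₖ (1 : Matrix n n R)) ((1 : Matrix m m R) ⊗ₖ A) := by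
  simp only [Commute, SemiconjBy, ← mul_kronecker_mul, mul_one, one_mul]

theorem one_kronecker_add_kronecker_one_pow (L : Matrix m m R) (A : Matrix n n R) (k : ℕ) :
    ((1 : Matrix m m R) ⊗ₖ A + L ⊗ₖ (1 : Matrix n n R)) ^ k =
      ∑ s ∈ range (k + 1), k.choose s • ((L ^ s) ⊗ₖ (A ^ (k - s))) := by
  rw [add_comm, (commute_kronecker_one_one_kronecker L A).add_pow]
  refine sum_congr rfl fun s _ => ?_
  rw [kronecker_pow, kronecker_pow, one_pow, one_pow, ← mul_kronecker_mul, mul_one, one_mul,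
    ← nsmul_eq_mul']

end Matrix

theorem kronecker_mulVec_vecKron {m n e d : ℕ} (M : Matrix (Fin m) (Fin n) ℝ)
    (N : Matrix (Fin e) (Fin d) ℝ) (x : Fin n → ℝ) (y : Fin d → ℝ) :
    (M ⊗ₖ N) *ᵥ vecKron x y = vecKron (M *ᵥ x) (N *ᵥ y) := by
  ext ⟨i, j⟩
  simp only [mulVec, dotProduct, vecKron, kronecker_apply, Fintype.sum_prod_type, sum_mul_sum]
  exact sum_congr rfl fun _ _ => sum_congr rfl fun _ _ => by ring

theorem vecKron_dotProduct_vecKron {n d : ℕ} (c u : Fin n → ℝ) (γ v : Fin d → ℝ) :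
    vecKron c γ ⬝ᵥ vecKron u v = (c ⬝ᵥ u) * (γ ⬝ᵥ v) := by
  simp only [dotProduct, vecKron, Fintype.sum_prod_type, sum_mul_sum]
  exact sum_congr rfl fun _ _ => sum_congr rfl fun _ _ => by ring

theorem multiagent_observation_formula_general (n d : ℕ)
    (L : Matrix (Fin n) (Fin n) ℝ) (A : Matrix (Fin d) (Fin d) ℝ)
    (c x₀ : Fin n → ℝ) (γ β : Fin d → ℝ) (k : ℕ) :
    vecKron c γ ⬝ᵥ
        (((1 : Matrix (Fin n) (Fin n) ℝ) ⊗ₖ A + L ⊗ₖ (1 : Matrix (Fin d) (Fin d) ℝ)) ^ k *ᵥ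
          vecKron x₀ β) =
      ∑ s ∈ Finset.range (k + 1),
        (k.choose s : ℝ) * (c ⬝ᵥ (L ^ s *ᵥ x₀)) * (γ ⬝ᵥ (A ^ (k - s) *ᵥ β)) := by
  rw [one_kronecker_add_kronecker_one_pow, sum_mulVec, dotProduct_sum]
  refine sum_congr rfl fun s _ => ?_
  rw [smul_mulVec, kronecker_mulVec_vecKron, dotProduct_smul, vecKron_dotProduct_vecKron,
    nsmul_eq_mul, mul_assoc]

/-- Observation formula for the coupled network:
`(c ⊗ γ)ᵀ (I_n ⊗ A + L ⊗ I_d)^k (x₀ ⊗ β) = Σ_{s=0}^k C(k,s) (cᵀ L^s x₀)(γᵀ A^{k-s} β)`. -/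
theorem multiagent_observation_formula (n d : ℕ) (hn : 1 ≤ n) (hd : 1 ≤ d)
    (L : Matrix (Fin n) (Fin n) ℝ) (A : Matrix (Fin d) (Fin d) ℝ)
    (c x₀ : Fin n → ℝ) (γ β : Fin d → ℝ) (k : ℕ) :
    vecKron c γ ⬝ᵥ
        (((1 : Matrix (Fin n) (Fin n) ℝ) ⊗ₖ A + L ⊗ₖ (1 : Matrix (Fin d) (Fin d) ℝ)) ^ k *ᵥ
          vecKron x₀ β) =
      ∑ s ∈ Finset.range (k + 1),
        (k.choose s : ℝ) * (c ⬝ᵥ (L ^ s *ᵥ x₀)) * (γ ⬝ᵥ (A ^ (k - s) *ᵥ β)) :=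
  multiagent_observation_formula_general n d L A c x₀ γ β k
end
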